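/- arXiv:1911.04061 — 3 statements merged into one kernel-verified Lean document; each statement's English description precedes it below -/
import Mathlib

section
/- If F(t) = G(Φ(t − δ(x))) where δ(x) ∈ ℝ, Φ is a CDF with mean m, and G∘Φ corresponds to an integrable distribution, then the mean of F equals m + δ(x) + ∫_{-∞}^{∞} ( Φ(t) − G(Φ(t)) ) dt, decomposing the predictive mean into the original ensemble mean, a direct correction δ, and an indirect correction from G. -/
/-!
The mean of a distribution with CDF `K` is `∫ (θ - K)`, where `θ = 1_{(0,∞)}` is the Heaviside
step, almost everywhere the CDF of the point mass at `0`. Hence two means differ by the integral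
of the difference of the CDFs, which produces the indirect correction `∫ (Φ - G ∘ Φ)`, and
translating `K` by `c` adds `∫ (θ t - θ (t - c)) dt = c`, the direct correction.
-/

open MeasureTheory Set

/-- The mean of a distribution with CDF `H`, via `∫_0^∞ (1 - H) - ∫_{-∞}^0 H`. -/
noncomputable def cdfMean (H : ℝ → ℝ) : ℝ :=
  (∫ t in Ioi (0 : ℝ), (1 - H t)) - ∫ t in Iio (0 : ℝ), H t

noncomputable def heaviside (t : ℝ) : ℝ := (Ioi (0 : ℝ)).indicator 1 t

theorem eqOn_heaviside_sub_Ioi (K : ℝ → ℝ) :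
    EqOn (fun t => heaviside t - K t) (fun t => 1 - K t) (Ioi 0) := fun t ht => by
  simp [heaviside, indicator_of_mem ht]

theorem eqOn_heaviside_sub_Iic (K : ℝ → ℝ) :
    EqOn (fun t => heaviside t - K t) (-K) (Iic 0) := fun t ht => by
  simp [heaviside, not_lt.2 (mem_Iic.1 ht)]

/-- One of the two intervals is empty: this is the signed interval from `0` to `c`. -/
theorem heaviside_sub_heaviside_comp_sub (c t : ℝ) :
    heaviside t - heaviside (t - c) = (Ioc 0 c).indicator 1 t - (Ioc c 0).indicator 1 t := by
  simp only [heaviside, indicator, mem_Ioi, mem_Ioc, sub_pos, Pi.one_apply]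
  split_ifs <;> grind

theorem integrable_indicator_Ioc_one (a b : ℝ) :
    Integrable ((Ioc a b).indicator (1 : ℝ → ℝ)) :=
  (integrable_indicator_iff measurableSet_Ioc).2 (integrableOn_const (by simp))

theorem integrable_heaviside_sub_heaviside_comp_sub (c : ℝ) :
    Integrable (fun t => heaviside t - heaviside (t - c)) := by
  simp_rw [heaviside_sub_heaviside_comp_sub]
  exact (integrable_indicator_Ioc_one 0 c).sub (integrable_indicator_Ioc_one c 0)

theorem integral_heaviside_sub_heaviside_comp_sub (c : ℝ) :
    ∫ t, (heaviside t - heaviside (t - c)) = c := by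
  simp_rw [heaviside_sub_heaviside_comp_sub]
  rw [integral_sub (integrable_indicator_Ioc_one 0 c) (integrable_indicator_Ioc_one c 0),
    integral_indicator_one measurableSet_Ioc, integral_indicator_one measurableSet_Ioc,
    Real.volume_real_Ioc, Real.volume_real_Ioc, sub_zero, zero_sub,
    max_zero_sub_max_neg_zero_eq_self]

theorem integrable_heaviside_sub_iff {K : ℝ → ℝ} :
    Integrable (fun t => heaviside t - K t) ↔
      IntegrableOn (fun t => 1 - K t) (Ioi 0) ∧ IntegrableOn K (Iio 0) := by
  rw [← integrableOn_univ, ← Iic_union_Ioi (a := (0 : ℝ)), integrableOn_union, and_comm,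
    integrableOn_congr_fun (eqOn_heaviside_sub_Ioi K) measurableSet_Ioi,
    integrableOn_congr_fun (eqOn_heaviside_sub_Iic K) measurableSet_Iic,
    integrableOn_neg_iff, integrableOn_Iic_iff_integrableOn_Iio]

theorem cdfMean_eq_integral_heaviside_sub {K : ℝ → ℝ}
    (hK : Integrable (fun t => heaviside t - K t)) :
    cdfMean K = ∫ t, (heaviside t - K t) := by
  rw [← intervalIntegral.integral_Iic_add_Ioi hK.integrableOn hK.integrableOn,
    setIntegral_congr_fun measurableSet_Ioi (eqOn_heaviside_sub_Ioi K),
    setIntegral_congr_fun measurableSet_Iic (eqOn_heaviside_sub_Iic K),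
    integral_neg', integral_Iic_eq_integral_Iio, cdfMean]
  ring

theorem cdfMean_eq_cdfMean_add_integral_sub {H K : ℝ → ℝ}
    (hH : Integrable (fun t => heaviside t - H t)) (hK : Integrable (fun t => heaviside t - K t)) :
    cdfMean K = cdfMean H + ∫ t, (H t - K t) := by
  have hdiff : (fun t => H t - K t) = fun t => (heaviside t - K t) - (heaviside t - H t) := by
    ext; ring
  rw [cdfMean_eq_integral_heaviside_sub hH, cdfMean_eq_integral_heaviside_sub hK, hdiff,
    integral_sub hK hH]
  ring

theorem cdfMean_comp_sub {K : ℝ → ℝ} (hK : Integrable (fun t => heaviside t - K t))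
    (c : ℝ) :
    cdfMean (fun t => K (t - c)) = cdfMean K + c := by
  have hdecomp : (fun t => heaviside t - K (t - c)) =
      fun t => (heaviside (t - c) - K (t - c)) + (heaviside t - heaviside (t - c)) := by
    ext; ring
  have hshift : Integrable (fun t => heaviside (t - c) - K (t - c)) := hK.comp_sub_right c
  have hstep := integrable_heaviside_sub_heaviside_comp_sub c
  rw [cdfMean_eq_integral_heaviside_sub (hdecomp ▸ hshift.add hstep), hdecomp,
    integral_add hshift hstep, integral_sub_right_eq_self (fun t => heaviside t - K t) c,
    integral_heaviside_sub_heaviside_comp_sub, cdfMean_eq_integral_heaviside_sub hK]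

theorem bne_predictive_mean_decomposition_general
    (Φ : ℝ → ℝ) (G : ℝ → ℝ) (δx m : ℝ) (hm : cdfMean Φ = m)
    (F : ℝ → ℝ) (hF : ∀ t, F t = G (Φ (t - δx)))
    (hΦint₁ : IntegrableOn (fun t => 1 - Φ t) (Ioi 0))
    (hΦint₂ : IntegrableOn Φ (Iio 0))
    (hGΦint₁ : IntegrableOn (fun t => 1 - G (Φ t)) (Ioi 0))
    (hGΦint₂ : IntegrableOn (fun t => G (Φ t)) (Iio 0)) :
    cdfMean F = m + δx + ∫ t : ℝ, (Φ t - G (Φ t)) := by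
  have hΦ := integrable_heaviside_sub_iff.2 ⟨hΦint₁, hΦint₂⟩
  have hGΦ : Integrable (fun t => heaviside t - G (Φ t)) :=
    integrable_heaviside_sub_iff.2 ⟨hGΦint₁, hGΦint₂⟩
  rw [funext hF, cdfMean_comp_sub hGΦ, cdfMean_eq_cdfMean_add_integral_sub hΦ hGΦ, hm]
  ring

/-- BNE predictive mean decomposition.  If `F t = G (Φ (t - δx))` where
`Φ` is a CDF with mean `m` and `G ∘ Φ` corresponds to an integrable distribution, then
`mean F = m + δx + ∫ (Φ t - G (Φ t)) dt`: the original ensemble mean, the direct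
correction `δ`, and the indirect correction from `G`. -/
theorem bne_predictive_mean_decomposition
    (Φ : ℝ → ℝ) (hΦmono : Monotone Φ) (hΦrange : ∀ t, Φ t ∈ Icc (0 : ℝ) 1)
    (G : ℝ → ℝ) (hGcont : ContinuousOn G (Icc 0 1))
    (hGmono : StrictMonoOn G (Icc 0 1)) (hGbij : BijOn G (Icc 0 1) (Icc 0 1))
    (δx m : ℝ) (hm : cdfMean Φ = m)
    (F : ℝ → ℝ) (hF : ∀ t, F t = G (Φ (t - δx)))
    (hΦint₁ : IntegrableOn (fun t => 1 - Φ t) (Ioi 0))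
    (hΦint₂ : IntegrableOn Φ (Iio 0))
    (hGΦint₁ : IntegrableOn (fun t => 1 - G (Φ t)) (Ioi 0))
    (hGΦint₂ : IntegrableOn (fun t => G (Φ t)) (Iio 0))
    (hFint₁ : IntegrableOn (fun t => 1 - F t) (Ioi 0))
    (hFint₂ : IntegrableOn F (Iio 0)) :
    cdfMean F = m + δx + ∫ t : ℝ, (Φ t - G (Φ t)) :=
  bne_predictive_mean_decomposition_general Φ G δx m hm F hF hΦint₁ hΦint₂ hGΦint₁ hGΦint₂
end

section
/- If F_n and F are CDFs on ℝ and ‖F_n − F‖₂ → 0 in L²(ℝ), and F is continuous, then F_n converges to F pointwise at every point, hence F_n converges weakly (in distribution) to F. -/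
/-!
L² convergence implies convergence in measure. If `Fₙ t` stayed `ε` away from `F t`, say above
it, then by monotonicity of `Fₙ` and continuity of `F` at `t` the gap `Fₙ - F` would remain at
least `ε / 2` on a whole interval `[t, t + δ]` with `δ` independent of `n` (below it, on
`[t - δ, t]`), contradicting convergence in measure.
-/

open MeasureTheory Set Filter Topology

theorem ofReal_le_volume_setOf_half_le_dist {F g : ℝ → ℝ} {t δ ε : ℝ} (hg : Monotone g)
    (hδ : 0 ≤ δ) (hF : ∀ s ∈ Icc (t - δ) (t + δ), dist (F s) (F t) ≤ ε / 2)
    (hgt : ε ≤ dist (g t) (F t)) :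
    ENNReal.ofReal δ ≤ volume {s | ε / 2 ≤ dist (g s) (F s)} := by
  simp only [Real.dist_eq, abs_le] at hF
  rw [Real.dist_eq] at hgt
  rcases le_total (F t) (g t) with hle | hle
  · calc ENNReal.ofReal δ = volume (Icc t (t + δ)) := by rw [Real.volume_Icc, add_sub_cancel_left]
      _ ≤ _ := measure_mono fun s hs => by
        obtain ⟨-, hFs⟩ := hF s ⟨by linarith [hs.1], hs.2⟩
        have := hg hs.1
        rw [abs_of_nonneg (sub_nonneg.2 hle)] at hgt
        show ε / 2 ≤ |g s - F s|
        exact le_abs.2 (Or.inl (by linarith))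
  · calc ENNReal.ofReal δ = volume (Icc (t - δ) t) := by rw [Real.volume_Icc, sub_sub_cancel]
      _ ≤ _ := measure_mono fun s hs => by
        obtain ⟨hFs, -⟩ := hF s ⟨hs.1, by linarith [hs.2]⟩
        have := hg hs.2
        rw [abs_of_nonpos (sub_nonpos.2 hle)] at hgt
        show ε / 2 ≤ |g s - F s|
        exact le_abs.2 (Or.inr (by linarith))

theorem Monotone.tendsto_apply_of_tendstoInMeasure {ι : Type*} {l : Filter ι} {f : ι → ℝ → ℝ}
    {F : ℝ → ℝ} {t : ℝ} (hf : ∀ i, Monotone (f i)) (hF : ContinuousAt F t)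
    (hfF : TendstoInMeasure volume f l F) : Tendsto (fun i => f i t) l (𝓝 (F t)) := by
  refine Metric.tendsto_nhds.2 fun ε hε => ?_
  obtain ⟨δ, hδ, hFδ⟩ := (nhds_basis_Icc_pos t).eventually_iff.1
    (hF.eventually (Metric.closedBall_mem_nhds (F t) (half_pos hε)))
  have hsmall := (tendstoInMeasure_iff_dist.1 hfF (ε / 2) (half_pos hε)).eventually_lt_const
    (ENNReal.ofReal_pos.2 hδ)
  filter_upwards [hsmall] with i hi
  by_contra! hε_le
  exact (ofReal_le_volume_setOf_half_le_dist (hf i) hδ.le hFδ hε_le).not_gt hi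

theorem tendsto_pointwise_of_L2_tendsto_cdf_general
    (F : ℝ → ℝ) (Fn : ℕ → ℝ → ℝ)
    (hFcont : Continuous F)
    (hFnmono : ∀ n, Monotone (Fn n))
    (hL2 : Tendsto (fun n => eLpNorm (fun t => Fn n t - F t) 2 volume)
      atTop (nhds 0)) :
    ∀ t, Tendsto (fun n => Fn n t) atTop (nhds (F t)) := fun t =>
  Monotone.tendsto_apply_of_tendstoInMeasure (t := t) hFnmono hFcont.continuousAt <|
    tendstoInMeasure_of_tendsto_eLpNorm two_ne_zero
      (fun n => (hFnmono n).measurable.aestronglyMeasurable)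
      hFcont.measurable.aestronglyMeasurable hL2

/-- If `Fₙ` and `F` are CDFs on `ℝ`, `‖Fₙ - F‖₂ → 0` in `L²(ℝ)`, and `F`
is continuous, then `Fₙ → F` pointwise at every point, hence `Fₙ` converges weakly
(in distribution) to `F`. -/
theorem tendsto_pointwise_of_L2_tendsto_cdf
    (F : ℝ → ℝ) (Fn : ℕ → ℝ → ℝ)
    (hFmono : Monotone F) (hFrange : ∀ t, F t ∈ Icc (0 : ℝ) 1)
    (hFcont : Continuous F)
    (hFnmono : ∀ n, Monotone (Fn n)) (hFnrange : ∀ n t, Fn n t ∈ Icc (0 : ℝ) 1)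
    (hL2 : Tendsto (fun n => eLpNorm (fun t => Fn n t - F t) 2 volume)
      atTop (nhds 0)) :
    ∀ t, Tendsto (fun n => Fn n t) atTop (nhds (F t)) :=
  tendsto_pointwise_of_L2_tendsto_cdf_general F Fn hFcont hFnmono hL2
end

section
/- If F and F* are CDFs supported on a compact interval [a,b] (i.e. F = F* = 0 on (−∞,a) and = 1 on [b,∞)) and F* is Lipschitz with constant L, then the Kolmogorov (sup-norm) distance satisfies ‖F − F*‖_∞ ≤ C ‖F − F*‖₂^{2/3} for a constant C depending only on L. -/
open MeasureTheory Set

lemma aux_integral_ge (g : ℝ → ℝ) (hg : Integrable g) (hnn : ∀ x, 0 ≤ g x)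
    (u v c : ℝ) (huv : u ≤ v) (hbnd : ∀ x ∈ Icc u v, c ≤ g x) :
    c * (v - u) ≤ ∫ x, g x := by
  have h1 : ∫ x in Icc u v, g x ≤ ∫ x, g x :=
    setIntegral_le_integral hg (Filter.Eventually.of_forall hnn)
  have h2 : ∫ x in Icc u v, (c : ℝ) ≤ ∫ x in Icc u v, g x := by
    refine setIntegral_mono_on ?_ hg.integrableOn measurableSet_Icc hbnd
    exact integrableOn_const (by simp [Real.volume_Icc])
  have h3 : ∫ x in Icc u v, (c : ℝ) = c * (v - u) := by
    simp [Real.volume_Icc, ENNReal.toReal_ofReal (sub_nonneg.2 huv), mul_comm, huv]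
  linarith

/-- If `F` and `F*` are CDFs supported on a compact interval `[a,b]` and
`F*` is `L`-Lipschitz, then the Kolmogorov (sup-norm) distance satisfies
`‖F - F*‖_∞ ≤ C ‖F - F*‖₂^{2/3}` for a constant `C` depending only on `L`
(here `‖F - F*‖₂^{2/3} = (∫ (F - F*)²)^{1/3}`). -/
theorem supnorm_le_L2_pow_two_thirds
    (L : ℝ) (hL : 0 < L) :
    ∃ C : ℝ, 0 < C ∧
      ∀ (a b : ℝ) (_ : a ≤ b) (F Fstar : ℝ → ℝ),
        Monotone F → (∀ t, F t ∈ Icc (0 : ℝ) 1) →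
        Monotone Fstar → (∀ t, Fstar t ∈ Icc (0 : ℝ) 1) →
        (∀ t < a, F t = 0) → (∀ t ≥ b, F t = 1) →
        (∀ t < a, Fstar t = 0) → (∀ t ≥ b, Fstar t = 1) →
        LipschitzWith (Real.toNNReal L) Fstar →
        ∀ t, |F t - Fstar t| ≤
          C * (∫ s : ℝ, (F s - Fstar s) ^ 2) ^ ((1 : ℝ) / 3) := by
  refine ⟨(8 * L) ^ ((1 : ℝ) / 3), Real.rpow_pos_of_pos (by linarith) _, ?_⟩
  intro a b hab F Fstar hFmono hF01 hFsmono hFs01 hFa hFb hFsa hFsb hLip t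
  set g : ℝ → ℝ := fun s => (F s - Fstar s) ^ 2 with hg_def
  have hgnn : ∀ x, 0 ≤ g x := fun x => sq_nonneg _
  -- integrability of g
  have hgmeas : Measurable g := ((hFmono.measurable.sub hFsmono.measurable).pow_const 2)
  have hgint : Integrable g := by
    have hbd : Integrable ((Icc a b).indicator (fun _ => (1 : ℝ))) := by
      rw [integrable_indicator_iff measurableSet_Icc]
      exact integrableOn_const (by simp [Real.volume_Icc])
    refine Integrable.mono' hbd hgmeas.aestronglyMeasurable
      (Filter.Eventually.of_forall fun x => ?_)
    rw [Real.norm_eq_abs, abs_of_nonneg (hgnn x)]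
    by_cases hx : x ∈ Icc a b
    · rw [indicator_of_mem hx]
      have h1 := hF01 x; have h2 := hFs01 x
      simp only [mem_Icc] at h1 h2
      show (F x - Fstar x) ^ 2 ≤ 1
      nlinarith
    · rw [indicator_of_notMem hx]
      simp only [mem_Icc, not_and_or, not_le] at hx
      rcases hx with hx | hx
      · simp [hg_def, hFa x hx, hFsa x hx]
      · simp [hg_def, hFb x hx.le, hFsb x hx.le]
  have hInn : 0 ≤ ∫ s, g s := integral_nonneg hgnn
  set I := ∫ s, g s with hI_def
  -- Lipschitz in real form
  have hlip : ∀ x y : ℝ, |Fstar x - Fstar y| ≤ L * |x - y| := by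
    intro x y
    have := hLip.dist_le_mul x y
    rwa [Real.dist_eq, Real.dist_eq, Real.coe_toNNReal L hL.le] at this
  set δ := |F t - Fstar t| with hδ_def
  have hδnn : 0 ≤ δ := abs_nonneg _
  -- key: δ^3 ≤ 8 * L * I
  have key : δ ^ 3 ≤ 8 * L * I := by
    rcases eq_or_lt_of_le hδnn with h0 | hδpos
    · rw [← h0]; nlinarith
    · set h := δ / (2 * L) with hh_def
      have hhpos : 0 < h := by positivity
      have main : (δ / 2) ^ 2 * h ≤ I := by
        rcases abs_cases (F t - Fstar t) with ⟨heq, _⟩ | ⟨heq, _⟩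
        · -- F t - Fstar t = δ > 0, use interval [t, t+h]
          have := aux_integral_ge g hgint hgnn t (t + h) ((δ / 2) ^ 2)
            (by linarith) ?_
          · simpa using this
          · intro x hx
            rcases hx with ⟨hx1, hx2⟩
            have hFx : F t ≤ F x := hFmono hx1
            have hFsx : Fstar x - Fstar t ≤ L * (x - t) := by
              have := hlip x t
              rw [abs_of_nonneg (by linarith : (0:ℝ) ≤ x - t)] at this
              exact (abs_le.mp this).2.trans (by linarith [le_refl (L * (x - t))])
            have hLh : L * (x - t) ≤ δ / 2 := by
              have : L * (x - t) ≤ L * h := by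
                apply mul_le_mul_of_nonneg_left (by linarith) hL.le
              rw [hh_def] at this
              calc L * (x - t) ≤ L * (δ / (2 * L)) := this
                _ = δ / 2 := by field_simp
            have hdiff : δ / 2 ≤ F x - Fstar x := by linarith
            exact pow_le_pow_left₀ (by linarith) hdiff 2
        · -- Fstar t - F t = δ > 0, use interval [t-h, t]
          have hδeq : δ = Fstar t - F t := by linarith
          have := aux_integral_ge g hgint hgnn (t - h) t ((δ / 2) ^ 2)
            (by linarith) ?_
          · simpa using this
          · intro x hx
            rcases hx with ⟨hx1, hx2⟩
            have hFx : F x ≤ F t := hFmono hx2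
            have hFsx : Fstar t - Fstar x ≤ L * (t - x) := by
              have := hlip t x
              rw [abs_of_nonneg (by linarith : (0:ℝ) ≤ t - x)] at this
              exact (abs_le.mp this).2
            have hLh : L * (t - x) ≤ δ / 2 := by
              have : L * (t - x) ≤ L * h := by
                apply mul_le_mul_of_nonneg_left (by linarith) hL.le
              rw [hh_def] at this
              calc L * (t - x) ≤ L * (δ / (2 * L)) := this
                _ = δ / 2 := by field_simp
            have hdiff : δ / 2 ≤ Fstar x - F x := by linarith
            have : (δ / 2) ^ 2 ≤ (Fstar x - F x) ^ 2 :=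
              pow_le_pow_left₀ (by linarith) hdiff 2
            calc (δ / 2) ^ 2 ≤ (Fstar x - F x) ^ 2 := this
              _ = (F x - Fstar x) ^ 2 := by ring
      have : δ ^ 3 / (8 * L) ≤ I := by
        have heq : (δ / 2) ^ 2 * h = δ ^ 3 / (8 * L) := by
          rw [hh_def]; field_simp; ring
        linarith [heq ▸ main]
      calc δ ^ 3 = (δ ^ 3 / (8 * L)) * (8 * L) := by field_simp
        _ ≤ I * (8 * L) := by apply mul_le_mul_of_nonneg_right this (by linarith)
        _ = 8 * L * I := by ring
  -- conclude via rpow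
  have h1 : δ = (δ ^ 3) ^ ((1 : ℝ) / 3) := by
    rw [← Real.rpow_natCast δ 3, ← Real.rpow_mul hδnn]
    norm_num
  rw [h1]
  calc (δ ^ 3) ^ ((1 : ℝ) / 3) ≤ (8 * L * I) ^ ((1 : ℝ) / 3) :=
        Real.rpow_le_rpow (by positivity) key (by norm_num)
    _ = (8 * L) ^ ((1 : ℝ) / 3) * I ^ ((1 : ℝ) / 3) :=
        Real.mul_rpow (by linarith) hInn
end
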